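/- Let d ≥ 3, α = (d-2)/2, η ∈ S^{d-1} a unit vector, and l a nonnegative integer. Then for every x ∈ ℝ^d with x = |x|ξ, ξ ∈ S^{d-1}: (x|η)^l = 2^{-l} Γ(α) Γ(l+1) |x|^l Σ_{k=0}^{⌊l/2⌋} (α+l-2k)/(k! Γ(α+l+1-k)) · C^α_{l-2k}((ξ|η)), where C^α_m denotes the Gegenbauer polynomial of degree m and index α. -/
import Mathlib


open MeasureTheory Finset
open scoped RealInnerProductSpace

noncomputable section

/-- The Gegenbauer polynomial of degree `m` and index `α`:
`C^α_m(t) = Σ_{j=0}^{⌊m/2⌋} (-1)^j Γ(α+m-j)/(Γ(α) Γ(j+1) Γ(m+1-2j)) (2t)^{m-2j}`. -/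
def gegenbauer (α : ℝ) (m : ℕ) (t : ℝ) : ℝ :=
  ∑ j ∈ Finset.range (m / 2 + 1),
    (-1) ^ j * Real.Gamma (α + m - j) /
      (Real.Gamma α * Real.Gamma (j + 1) * Real.Gamma ((m : ℝ) + 1 - 2 * j)) *
      (2 * t) ^ (m - 2 * j)

/-- Triangle reindexing for double sums. -/
private lemma sum_triangle (f : ℕ → ℕ → ℝ) (N : ℕ) :
    ∑ k ∈ Finset.range N, ∑ j ∈ Finset.range (N - k), f k j =
      ∑ n ∈ Finset.range N, ∑ k ∈ Finset.range (n + 1), f k (n - k) := by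
  induction N with
  | zero => simp
  | succ N ih =>
    rw [Finset.sum_range_succ (f := fun n => ∑ k ∈ Finset.range (n + 1), f k (n - k)), ← ih]
    rw [Finset.sum_range_succ (f := fun k => ∑ j ∈ Finset.range (N + 1 - k), f k j)]
    have h1 : ∑ k ∈ Finset.range N, ∑ j ∈ Finset.range (N + 1 - k), f k j
        = ∑ k ∈ Finset.range N, ((∑ j ∈ Finset.range (N - k), f k j) + f k (N - k)) := by
      refine Finset.sum_congr rfl fun k hk => ?_
      have hk' := Finset.mem_range.mp hk
      rw [show N + 1 - k = (N - k) + 1 from by omega, Finset.sum_range_succ]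
    rw [h1, Finset.sum_add_distrib, show N + 1 - N = 1 from by omega, Finset.sum_range_one,
        Finset.sum_range_succ (f := fun k => f k (N - k)), Nat.sub_self]
    ring

/-- The summand of the inner coefficient sum. -/
private def Sterm (a : ℝ) (n k : ℕ) : ℝ :=
  (-1) ^ (n - k) * (a - 2 * k) * Real.Gamma (a - n - k) /
    (k.factorial * Real.Gamma (a + 1 - k) * (n - k).factorial)

/-- Telescoping auxiliary function. -/
private def Bfun (a : ℝ) (n k : ℕ) : ℝ :=
  (-1 : ℝ) ^ (n - k) * k * Real.Gamma (a - n - k + 1) /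
    (k.factorial * Real.Gamma (a + 1 - k) * (n - k).factorial * n)

private lemma S_eq_zero {a : ℝ} {n : ℕ} (hn : 1 ≤ n) (ha : 2 * (n : ℝ) < a) :
    ∑ k ∈ Finset.range (n + 1), Sterm a n k = 0 := by
  have hn0 : (n : ℝ) ≠ 0 := Nat.cast_ne_zero.mpr (by omega)
  have key : ∀ k < n, Sterm a n k = Bfun a n k - Bfun a n (k + 1) := by
    intro k hk
    obtain ⟨e, he⟩ : ∃ e, n = k + (e + 1) := ⟨n - k - 1, by omega⟩
    have h1 : n - k = e + 1 := by omega
    have h2 : n - (k + 1) = e := by omega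
    have hne : (n : ℝ) = (k : ℝ) + (e : ℝ) + 1 := by exact_mod_cast congrArg Nat.cast he
    have hk0 : (0:ℝ) ≤ (k:ℝ) := Nat.cast_nonneg k
    have he0 : (0:ℝ) ≤ (e:ℝ) := Nat.cast_nonneg e
    rw [hne] at ha
    have hx1 : 0 < a - ((k : ℝ) + (e : ℝ) + 1) - (k : ℝ) := by linarith
    have hx2 : 0 < a - (k : ℝ) := by linarith
    simp only [Sterm, Bfun, h1, h2]
    rw [hne]
    push_cast
    rw [show a + 1 - ((k : ℝ) + 1) = a - (k : ℝ) from by ring]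
    rw [show a - ((k : ℝ) + (e : ℝ) + 1) - ((k : ℝ) + 1) + 1
        = a - ((k : ℝ) + (e : ℝ) + 1) - (k : ℝ) from by ring]
    rw [show a + 1 - (k : ℝ) = (a - (k : ℝ)) + 1 from by ring,
        Real.Gamma_add_one hx2.ne', Real.Gamma_add_one hx1.ne']
    rw [Nat.factorial_succ, Nat.factorial_succ, pow_succ]
    have hΓ1 : Real.Gamma (a - ((k : ℝ) + (e : ℝ) + 1) - (k : ℝ)) ≠ 0 :=
      (Real.Gamma_pos_of_pos hx1).ne'
    have hΓ2 : Real.Gamma (a - (k : ℝ)) ≠ 0 := (Real.Gamma_pos_of_pos hx2).ne'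
    have hf1 : ((k.factorial : ℝ)) ≠ 0 := Nat.cast_ne_zero.mpr k.factorial_ne_zero
    have hf2 : ((e.factorial : ℝ)) ≠ 0 := Nat.cast_ne_zero.mpr e.factorial_ne_zero
    have hp1 : ((k : ℝ) + 1) ≠ 0 := by positivity
    have hp2 : ((e : ℝ) + 1) ≠ 0 := by positivity
    have hp3 : ((k : ℝ) + (e : ℝ) + 1) ≠ 0 := by positivity
    push_cast
    field_simp
    ring
  rw [Finset.sum_range_succ, Finset.sum_congr rfl
      (fun k hk => key k (Finset.mem_range.mp hk)), Finset.sum_range_sub' (Bfun a n)]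
  have hB0 : Bfun a n 0 = 0 := by simp [Bfun]
  have hBn : Sterm a n n = Bfun a n n := by
    have hx : 0 < a - (n : ℝ) - (n : ℝ) := by linarith
    have hx' : 0 < a + 1 - (n : ℝ) := by linarith [Nat.cast_nonneg (α := ℝ) n]
    simp only [Sterm, Bfun, Nat.sub_self, pow_zero, Nat.factorial_zero]
    rw [Real.Gamma_add_one hx.ne']
    have hΓ1 : Real.Gamma (a - (n : ℝ) - (n : ℝ)) ≠ 0 := (Real.Gamma_pos_of_pos hx).ne'
    have hΓ2 : Real.Gamma (a + 1 - (n : ℝ)) ≠ 0 := (Real.Gamma_pos_of_pos hx').ne'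
    have hf : ((n.factorial : ℝ)) ≠ 0 := Nat.cast_ne_zero.mpr n.factorial_ne_zero
    field_simp
    ring
  rw [hB0, hBn]
  ring

private lemma key_identity (α : ℝ) (hα : 0 < α) (l : ℕ) (t : ℝ) :
    (2 : ℝ) ^ (-(l : ℤ)) * Real.Gamma α * Real.Gamma ((l : ℝ) + 1) *
      ∑ k ∈ Finset.range (l / 2 + 1),
        (α + l - 2 * k) / ((Nat.factorial k) * Real.Gamma (α + l + 1 - k)) *
          gegenbauer α (l - 2 * k) t = t ^ l := by
  have hΓα : Real.Gamma α ≠ 0 := (Real.Gamma_pos_of_pos hα).ne'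
  have hstep1 : ∑ k ∈ Finset.range (l / 2 + 1),
        (α + l - 2 * k) / ((Nat.factorial k) * Real.Gamma (α + l + 1 - k)) *
          gegenbauer α (l - 2 * k) t
      = ∑ k ∈ Finset.range (l / 2 + 1), ∑ j ∈ Finset.range (l / 2 + 1 - k),
          (2 * t) ^ (l - 2 * (k + j)) / ((l - 2 * (k + j)).factorial * Real.Gamma α) *
            Sterm (α + l) (k + j) k := by
    refine Finset.sum_congr rfl fun k hk => ?_
    have hkl : 2 * k ≤ l := by have := Finset.mem_range.mp hk; omega
    unfold gegenbauer
    rw [show (l - 2 * k) / 2 + 1 = l / 2 + 1 - k from by omega, Finset.mul_sum]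
    refine Finset.sum_congr rfl fun j hj => ?_
    have hj' : 2 * (k + j) ≤ l := by have := Finset.mem_range.mp hj; omega
    have c1 : ((l - 2 * k : ℕ) : ℝ) = (l : ℝ) - 2 * k := by
      rw [Nat.cast_sub hkl]; push_cast; ring
    have c2 : ((l - 2 * (k + j) : ℕ) : ℝ) = (l : ℝ) - 2 * ((k : ℝ) + (j : ℝ)) := by
      rw [Nat.cast_sub hj']; push_cast; ring
    rw [show α + ((l - 2 * k : ℕ) : ℝ) - (j : ℝ) = α + (l : ℝ) - ((k + j : ℕ) : ℝ) - (k : ℝ)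
        from by rw [c1]; push_cast; ring]
    rw [show ((l - 2 * k : ℕ) : ℝ) + 1 - 2 * (j : ℝ) = ((l - 2 * (k + j) : ℕ) : ℝ) + 1
        from by rw [c1, c2]; push_cast; ring]
    rw [Real.Gamma_nat_eq_factorial (l - 2 * (k + j)), Real.Gamma_nat_eq_factorial j]
    rw [show (l - 2 * k) - 2 * j = l - 2 * (k + j) from by omega]
    simp only [Sterm, Nat.add_sub_cancel_left]
    ring
  rw [hstep1, sum_triangle]
  have hstep3 : ∑ n ∈ Finset.range (l / 2 + 1), ∑ k ∈ Finset.range (n + 1),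
        (2 * t) ^ (l - 2 * (k + (n - k))) /
          ((l - 2 * (k + (n - k))).factorial * Real.Gamma α) *
            Sterm (α + l) (k + (n - k)) k
      = (2 * t) ^ l / (l.factorial * Real.Gamma α) := by
    rw [Finset.sum_eq_single_of_mem 0 (Finset.mem_range.mpr (by omega))]
    · simp only [Nat.zero_add, zero_add, Finset.sum_range_one, Nat.sub_self, Nat.add_zero, Nat.mul_zero, Nat.sub_zero]
      have ha0 : 0 < α + (l : ℝ) := by have := Nat.cast_nonneg (α := ℝ) l; linarith
      have hΓa : Real.Gamma (α + (l : ℝ)) ≠ 0 := (Real.Gamma_pos_of_pos ha0).ne'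
      have hf : ((l.factorial : ℝ)) ≠ 0 := Nat.cast_ne_zero.mpr l.factorial_ne_zero
      simp only [Sterm, Nat.sub_self, pow_zero, Nat.cast_zero, mul_zero, sub_zero,
        Nat.factorial_zero, Nat.cast_one]
      rw [show α + (l : ℝ) + 1 = (α + (l : ℝ)) + 1 from by ring, Real.Gamma_add_one ha0.ne']
      field_simp
    · intro n hn hn0
      have hn1 : 1 ≤ n := by omega
      have h2n : 2 * n ≤ l := by have := Finset.mem_range.mp hn; omega
      have h2n' : 2 * (n : ℝ) < α + l := by
        have : ((2 * n : ℕ) : ℝ) ≤ (l : ℝ) := Nat.cast_le.mpr h2n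
        push_cast at this
        linarith
      have hcongr : ∀ k ∈ Finset.range (n + 1),
          (2 * t) ^ (l - 2 * (k + (n - k))) /
            ((l - 2 * (k + (n - k))).factorial * Real.Gamma α) *
              Sterm (α + l) (k + (n - k)) k
          = (2 * t) ^ (l - 2 * n) / ((l - 2 * n).factorial * Real.Gamma α) *
              Sterm (α + l) n k := by
        intro k hk
        rw [show k + (n - k) = n from by have := Finset.mem_range.mp hk; omega]
      rw [Finset.sum_congr rfl hcongr, ← Finset.mul_sum, S_eq_zero hn1 h2n', mul_zero]
  rw [hstep3, Real.Gamma_nat_eq_factorial, zpow_neg, zpow_natCast, mul_pow]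
  have hf : ((l.factorial : ℝ)) ≠ 0 := Nat.cast_ne_zero.mpr l.factorial_ne_zero
  have h2 : ((2 : ℝ) ^ l) ≠ 0 := by positivity
  field_simp

/-- **Expansion of elementary zonal polynomials (equation (7)).** For a unit vector
`η ∈ S^{d-1} ⊂ ℝ^d` (`d ≥ 3`, `α = (d-2)/2`) and `x = |x|ξ` with `ξ ∈ S^{d-1}`:
`(x|η)^l = 2^{-l} Γ(α) Γ(l+1) |x|^l Σ_{k=0}^{⌊l/2⌋} (α+l-2k)/(k! Γ(α+l+1-k)) C^α_{l-2k}((ξ|η))`. -/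
theorem zonal_polynomial_expansion (d l : ℕ) (hd : 3 ≤ d)
    (α : ℝ) (hα : α = ((d : ℝ) - 2) / 2)
    (η ξ : EuclideanSpace ℝ (Fin d)) (hη : ‖η‖ = 1) (hξ : ‖ξ‖ = 1)
    (x : EuclideanSpace ℝ (Fin d)) (hx : x = ‖x‖ • ξ) :
    ⟪x, η⟫ ^ l =
      (2 : ℝ) ^ (-(l : ℤ)) * Real.Gamma α * Real.Gamma ((l : ℝ) + 1) * ‖x‖ ^ l *
        ∑ k ∈ Finset.range (l / 2 + 1),
          (α + l - 2 * k) / ((Nat.factorial k) * Real.Gamma (α + l + 1 - k)) *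
            gegenbauer α (l - 2 * k) ⟪ξ, η⟫ := by
  have hα0 : 0 < α := by
    have h3 : (3 : ℝ) ≤ (d : ℝ) := by exact_mod_cast hd
    rw [hα]; linarith
  have hinner : ⟪x, η⟫ = ‖x‖ * ⟪ξ, η⟫ := by
    conv_lhs => rw [hx]
    exact real_inner_smul_left ξ η ‖x‖
  have hk := key_identity α hα0 l ⟪ξ, η⟫
  rw [hinner, mul_pow, ← hk]
  ring

end
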